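/- Suppose φ is a continuous flow on a compact metric space X with open set of fixed points. Then φ is K-expansive if and only if φ is K*-expansive. -/

import Mathlib

/-!
K-expansiveness gives K*-expansiveness with `t₀ = 0`. Conversely, let `x, y, s` shadow each other
closely, with the orbits meeting at time `t₀` up to a lag `|τ| < a` (K*), but with `y` not on the
`ε`-piece of the orbit of `x`. The lag of the `y`-orbit behind the `x`-orbit, taken modulo the
periods of `x`, varies continuously from at least `ε` at time `0` to below `a` at time `t₀`; where
it equals `a` we find a non-fixed point `u` with `φ_r u` close to `u` for some `|r| ≈ a`.
Since the fixed set is open, the non-fixed points form a compact set, on which approximate periods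
in `[a, 2a]` converge to genuine ones, while genuine periods are bounded away from `0` (a limit of
points with periods tending to `0` is fixed). For small `a` this is a contradiction.
-/

open Filter Topology Metric Set

namespace Flow

section AddGroup

variable {τ α : Type*} [TopologicalSpace τ] [AddGroup τ] [TopologicalSpace α] (ϕ : Flow τ α)

def periods (x : α) : AddSubgroup τ :=
  @AddAction.stabilizer τ α _ ϕ.toAddAction x

def fixedPoints : Set α :=
  {x | ∀ t, ϕ t x = x}

variable {ϕ}

@[simp]
theorem mem_periods {x : α} {t : τ} : t ∈ ϕ.periods x ↔ ϕ t x = x :=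
  Iff.rfl

theorem map_sub_of_mem_periods {x : α} {q : τ} (hq : q ∈ ϕ.periods x) (t : τ) :
    ϕ (t - q) x = ϕ t x := by
  rw [sub_eq_add_neg, map_add, mem_periods.1 (neg_mem hq)]

theorem eq_of_map_mem_fixedPoints {x : α} {t : τ} (h : ϕ t x ∈ ϕ.fixedPoints) : ϕ t x = x := by
  calc ϕ t x = ϕ (-t) (ϕ t x) := (h (-t)).symm
    _ = x := by rw [← map_add, neg_add_cancel, map_zero_apply]

end AddGroup

section Real

variable {α : Type*} [TopologicalSpace α] {ϕ : Flow ℝ α}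

theorem abs_mem_periods {x : α} {r : ℝ} (hr : r ∈ ϕ.periods x) : |r| ∈ ϕ.periods x := by
  rcases abs_choice r with h | h <;> rw [h]
  exacts [hr, neg_mem hr]

theorem mem_fixedPoints_of_tendsto [T2Space α] {ι : Type*} {l : Filter ι} [l.NeBot] {z : ι → α} {r : ι → ℝ} {w : α}
    (hz : Tendsto z l (𝓝 w)) (hr : Tendsto r l (𝓝 0)) (hr0 : ∀ i, r i ≠ 0)
    (hper : ∀ i, r i ∈ ϕ.periods (z i)) : w ∈ ϕ.fixedPoints := by
  intro t
  have hpos : ∀ i, 0 < |r i| := fun i => abs_pos.2 (hr0 i)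
  set ρ : ι → ℝ := fun i => toIcoMod (hpos i) 0 t
  have hρ : ∀ i, ϕ t (z i) = ϕ (ρ i) (z i) := fun i => by
    conv_lhs => rw [← toIcoMod_add_toIcoDiv_zsmul (hpos i) 0 t]
    rw [map_add, mem_periods.1 (zsmul_mem (abs_mem_periods (hper i)) _)]
  have hρ0 : Tendsto ρ l (𝓝 0) := by
    refine squeeze_zero_norm (fun i => ?_) (by simpa using hr.abs)
    obtain ⟨h0, h1⟩ := toIcoMod_mem_Ico' (hpos i) t
    rw [Real.norm_eq_abs, abs_of_nonneg h0]
    exact h1.le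
  have hlim : Tendsto (fun i => ϕ (ρ i) (z i)) l (𝓝 (ϕ 0 w)) :=
    (ϕ.continuous continuous_fst continuous_snd).tendsto (0, w) |>.comp (hρ0.prodMk_nhds hz)
  rw [map_zero_apply] at hlim
  refine tendsto_nhds_unique ?_ hlim
  simpa only [Function.comp_def, hρ] using ((ϕ.continuous_toFun t).tendsto w).comp hz

end Real

section Metric

variable {X : Type*} [MetricSpace X] {ϕ : Flow ℝ X}

variable (ϕ) in
def IsKExpansive : Prop :=
  ∀ ε > (0:ℝ), ∃ δ > (0:ℝ), ∀ (x y : X) (s : ℝ → ℝ),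
    StrictMono s → Function.Surjective s → s 0 = 0 →
    (∀ t, dist (ϕ t x) (ϕ (s t) y) < δ) →
    ∃ τ : ℝ, |τ| < ε ∧ y = ϕ τ x

variable (ϕ) in
def IsKStarExpansive : Prop :=
  ∀ ε > (0:ℝ), ∃ δ > (0:ℝ), ∀ (x y : X) (s : ℝ → ℝ),
    StrictMono s → Function.Surjective s → s 0 = 0 →
    (∀ t, dist (ϕ t x) (ϕ (s t) y) < δ) →
    ∃ t₀ τ : ℝ, |τ| < ε ∧ ϕ (s t₀) y = ϕ (t₀ + τ) x

theorem exists_pos_le_abs_of_mem_periods [CompactSpace X] (hF : IsOpen ϕ.fixedPoints) :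
    ∃ η > 0, ∀ z ∉ ϕ.fixedPoints, ∀ r ∈ ϕ.periods z, r ≠ 0 → η ≤ |r| := by
  by_contra! h
  choose z hzF r hper hr0 hr using fun n : ℕ => h (1 / (n + 1)) Nat.one_div_pos_of_nat
  obtain ⟨w, -, m, hm, hzw⟩ := isCompact_univ.tendsto_subseq fun n => mem_univ (z n)
  have hr_lim : Tendsto (r ∘ m) atTop (𝓝 0) :=
    squeeze_zero_norm (fun n => (hr (m n)).le)
      (tendsto_one_div_add_atTop_nhds_zero_nat.comp hm.tendsto_atTop)
  have hw : w ∈ ϕ.fixedPoints :=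
    mem_fixedPoints_of_tendsto hzw hr_lim (fun n => hr0 (m n)) fun n => hper (m n)
  obtain ⟨n, hn⟩ := (hzw.eventually_mem (hF.mem_nhds hw)).exists
  exact hzF (m n) hn

theorem exists_pos_le_dist_of_isCompact [CompactSpace X] (hF : IsOpen ϕ.fixedPoints)
    {S : Set ℝ} (hS : IsCompact S) (hS_per : ∀ z ∉ ϕ.fixedPoints, ∀ r ∈ S, ϕ r z ≠ z) :
    ∃ μ > 0, ∀ u ∉ ϕ.fixedPoints, ∀ r ∈ S, μ ≤ dist (ϕ r u) u := by
  have hcont : Continuous fun p : X × ℝ => dist (ϕ p.2 p.1) p.1 :=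
    (ϕ.continuous continuous_snd continuous_fst).dist continuous_fst
  obtain ⟨μ, hμ, hle⟩ := (hF.isClosed_compl.isCompact.prod hS).exists_forall_le'
    hcont.continuousOn (a := 0) fun p hp => dist_pos.2 (hS_per p.1 hp.1 p.2 hp.2)
  exact ⟨μ, hμ, fun u hu r hr => hle (u, r) ⟨hu, hr⟩⟩

theorem exists_almost_period_of_shadowing {x y : X} {s : ℝ → ℝ} (hs : Continuous s)
    (hs0 : s 0 = 0) {μ a ε t₀ τ : ℝ} (hclose : ∀ t, dist (ϕ t x) (ϕ (s t) y) < μ)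
    (hτ : |τ| < a) (haε : a ≤ ε) (hmeet : ϕ (s t₀) y = ϕ (t₀ + τ) x)
    (hy : ∀ σ, |σ| < ε → y ≠ ϕ σ x) :
    ∃ u ∉ ϕ.fixedPoints, ∃ r, dist (ϕ r u) u < μ ∧ a ≤ |r| ∧ |r| < a + μ := by
  set P : Set ℝ := (ϕ.periods x : Set ℝ)
  have hP : P.Nonempty := ⟨0, zero_mem _⟩
  set h : ℝ → ℝ := fun t => s t - s t₀ + (t₀ + τ)
  have hh : ∀ t, ϕ (s t) y = ϕ (h t) x := fun t => by
    rw [map_add, ← hmeet, ← map_add, sub_add_cancel]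
  -- the lag of the `y`-orbit behind the `x`-orbit, modulo the periods of `x`
  set H : ℝ → ℝ := fun t => infDist (h t - t) P
  have hH : Continuous H := (continuous_infDist_pt P).comp (by fun_prop)
  have hH0 : ε ≤ H 0 := by
    by_contra! hlt
    obtain ⟨q, hq, hdist⟩ := (infDist_lt_iff hP).1 hlt
    refine hy (h 0 - 0 - q) (by rwa [← Real.dist_eq]) ?_
    rw [map_sub_of_mem_periods hq, sub_zero, ← hh, hs0, map_zero_apply]
  have hHt₀ : H t₀ < a :=
    calc H t₀ ≤ dist (h t₀ - t₀) 0 := infDist_le_dist_of_mem (zero_mem _)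
      _ = |τ| := by simp [h]
      _ < a := hτ
  obtain ⟨t₁, -, hHt₁⟩ := intermediate_value_uIcc hH.continuousOn
    (mem_uIcc.2 (Or.inr ⟨hHt₀.le, haε.trans hH0⟩))
  have hμ : 0 < μ := dist_nonneg.trans_lt (hclose 0)
  obtain ⟨q, hq, hdist⟩ := (infDist_lt_iff hP).1 (show H t₁ < a + μ by linarith)
  refine ⟨ϕ t₁ x, fun hfix => ?_, h t₁ - t₁ - q, ?_, ?_, by rwa [← Real.dist_eq]⟩
  · rw [eq_of_map_mem_fixedPoints hfix] at hfix
    have : H t₁ = 0 := infDist_zero_of_mem (hfix _)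
    linarith [abs_nonneg τ]
  · rw [← map_add, show h t₁ - t₁ - q + t₁ = h t₁ - q by ring, map_sub_of_mem_periods hq, ← hh,
      dist_comm]
    exact hclose t₁
  · rw [← Real.dist_eq, ← hHt₁]
    exact infDist_le_dist_of_mem hq

theorem IsKExpansive.isKStarExpansive (h : ϕ.IsKExpansive) : ϕ.IsKStarExpansive := by
  intro ε hε
  obtain ⟨δ, hδ, hK⟩ := h ε hε
  refine ⟨δ, hδ, fun x y s hs hsurj hs0 hclose => ?_⟩
  obtain ⟨τ, hτ, rfl⟩ := hK x y s hs hsurj hs0 hclose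
  exact ⟨0, τ, hτ, by rw [hs0, map_zero_apply, zero_add]⟩

theorem IsKStarExpansive.isKExpansive [CompactSpace X] (hF : IsOpen ϕ.fixedPoints)
    (h : ϕ.IsKStarExpansive) : ϕ.IsKExpansive := by
  intro ε hε
  obtain ⟨η, hη, hgap⟩ := exists_pos_le_abs_of_mem_periods hF
  set a := min ε (η / 3)
  have ha : 0 < a := lt_min hε (by positivity)
  set S : Set ℝ := closedBall 0 (2 * a) \ ball 0 a
  have hmemS : ∀ r, r ∈ S ↔ |r| ≤ 2 * a ∧ a ≤ |r| := fun r => by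
    simp only [S, Set.mem_sdiff, mem_closedBall_zero_iff, mem_ball_zero_iff, Real.norm_eq_abs,
      not_lt]
  have hS_per : ∀ z ∉ ϕ.fixedPoints, ∀ r ∈ S, ϕ r z ≠ z := by
    intro z hz r hr hper
    obtain ⟨hr₂, hr₁⟩ := (hmemS r).1 hr
    have := hgap z hz r hper (abs_pos.1 (ha.trans_le hr₁))
    linarith [min_le_right ε (η / 3)]
  obtain ⟨μ, hμ, hμS⟩ := exists_pos_le_dist_of_isCompact hF
    ((isCompact_closedBall 0 _).diff isOpen_ball) hS_per
  obtain ⟨δ, hδ, hK⟩ := h a ha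
  refine ⟨min δ (min μ a), by positivity, fun x y s hs hsurj hs0 hclose => ?_⟩
  obtain ⟨t₀, τ, hτ, hmeet⟩ :=
    hK x y s hs hsurj hs0 fun t => (hclose t).trans_le (min_le_left _ _)
  by_contra! hy
  obtain ⟨u, hu, r, hdist, har, hra⟩ := exists_almost_period_of_shadowing
    (hs.monotone.continuous_of_surjective hsurj) hs0 hclose hτ (min_le_left _ _) hmeet hy
  have hrS : r ∈ S := (hmemS r).2 ⟨by linarith [min_le_right δ (min μ a), min_le_right μ a], har⟩
  linarith [hμS u hu r hrS, min_le_right δ (min μ a), min_le_left μ a]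

theorem isKExpansive_iff_isKStarExpansive [CompactSpace X] (hF : IsOpen ϕ.fixedPoints) :
    ϕ.IsKExpansive ↔ ϕ.IsKStarExpansive :=
  ⟨IsKExpansive.isKStarExpansive, IsKStarExpansive.isKExpansive hF⟩

end Metric

end Flow

theorem stmt6 {X : Type*} [MetricSpace X] [CompactSpace X]
    (φ : ℝ → X → X)
    (hcont : Continuous fun p : ℝ × X => φ p.1 p.2)
    (h0 : ∀ x, φ 0 x = x)
    (hadd : ∀ t s x, φ (t + s) x = φ t (φ s x))
    (hopen : IsOpen {x : X | ∀ t, φ t x = x}) :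
    (∀ ε > (0:ℝ), ∃ δ > (0:ℝ), ∀ (x y : X) (s : ℝ → ℝ),
        StrictMono s → Function.Surjective s → s 0 = 0 →
        (∀ t, dist (φ t x) (φ (s t) y) < δ) →
        ∃ τ : ℝ, |τ| < ε ∧ y = φ τ x) ↔
      (∀ ε > (0:ℝ), ∃ δ > (0:ℝ), ∀ (x y : X) (s : ℝ → ℝ),
        StrictMono s → Function.Surjective s → s 0 = 0 →
        (∀ t, dist (φ t x) (φ (s t) y) < δ) →
        ∃ t₀ τ : ℝ, |τ| < ε ∧ φ (s t₀) y = φ (t₀ + τ) x) :=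
  let ϕ : Flow ℝ X := ⟨φ, hcont, hadd, h0⟩
  ϕ.isKExpansive_iff_isKStarExpansive hopen
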